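/- arXiv:2205.12839 — 3 statements merged into one kernel-verified Lean document; each statement's English description precedes it below -/
import Mathlib

section
/- Let n ≥ 2, let k be an integer with 1 ≤ k ≤ n−1, let p₁,…,pₙ be integers with pⱼ ≥ 2 for all j, and let C = (c_{i,j}) be a k×n complex matrix. Consider the Pham–Brieskorn–Hamm polynomials f_i(z₁,…,zₙ) = Σ_{j=1}^n c_{i,j}·zⱼ^{pⱼ} for i = 1,…,k, and let V ⊆ ℂⁿ be their common zero set. Then all maximal minors of C are nonzero if and only if for every z ∈ V with z ≠ 0 the Jacobian matrix J(z) = (c_{i,j}·pⱼ·zⱼ^{pⱼ−1})_{1≤i≤k, 1≤j≤n} has rank k over ℂ. -/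
open Matrix

lemma sum_mul_extend {k n : ℕ} (σ : Fin k ↪ Fin n) (g : Fin n → ℂ) (v : Fin k → ℂ) :
    ∑ j, g j * Function.extend σ v 0 j = ∑ i, g (σ i) * v i := by
  calc ∑ j, g j * Function.extend σ v 0 j
      = ∑ j ∈ Finset.univ.image σ, g j * Function.extend σ v 0 j := by
        refine (Finset.sum_subset (Finset.subset_univ _) ?_).symm
        intro j _ hj
        have : ¬ ∃ i, σ i = j := by
          rintro ⟨i, hi⟩
          exact hj (Finset.mem_image.2 ⟨i, Finset.mem_univ i, hi⟩)
        rw [Function.extend_apply' _ _ _ this, Pi.zero_apply, mul_zero]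
    _ = ∑ i, g (σ i) * Function.extend σ v 0 (σ i) :=
        Finset.sum_image (fun a _ b _ h => σ.injective h)
    _ = ∑ i, g (σ i) * v i := by
        simp [σ.injective.extend_apply]

lemma sum_emb_eq_sum {k n : ℕ} (τ : Fin k ↪ Fin n) (F : Fin n → ℂ)
    (hF : ∀ j, (∀ i, τ i ≠ j) → F j = 0) : ∑ i, F (τ i) = ∑ j, F j := by
  calc ∑ i, F (τ i) = ∑ j ∈ Finset.univ.image τ, F j :=
        (Finset.sum_image (fun a _ b _ h => τ.injective h)).symm
    _ = ∑ j, F j := by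
        refine Finset.sum_subset (Finset.subset_univ _) ?_
        intro j _ hj
        refine hF j fun i hi => hj (Finset.mem_image.2 ⟨i, Finset.mem_univ i, hi⟩)

lemma rank_lt_of_vecMul_eq_zero {k n : ℕ} (J : Matrix (Fin k) (Fin n) ℂ)
    (u : Fin k → ℂ) (hu : u ≠ 0) (h : Matrix.vecMul u J = 0) : J.rank < k := by
  rw [← J.rank_transpose]
  have hker : u ∈ LinearMap.ker (Jᵀ.mulVecLin) := by
    simp [Matrix.mulVecLin_apply, Matrix.mulVec_transpose, h]
  have h1 : 0 < Module.finrank ℂ (LinearMap.ker Jᵀ.mulVecLin) := by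
    rw [Module.finrank_pos_iff]
    exact nontrivial_of_ne ⟨u, hker⟩ 0 (by simpa [Subtype.ext_iff] using hu)
  have h2 := LinearMap.finrank_range_add_finrank_ker (Jᵀ.mulVecLin)
  have h3 : Module.finrank ℂ (Fin k → ℂ) = k := by simp
  rw [Matrix.rank]
  omega

lemma rank_eq_of_submatrix_det {k n : ℕ} (J : Matrix (Fin k) (Fin n) ℂ)
    (τ : Fin k ↪ Fin n) (h : (J.submatrix id τ).det ≠ 0) : J.rank = k := by
  classical
  refine le_antisymm (by simpa using J.rank_le_card_height) ?_
  have hle : LinearMap.range ((J.submatrix id τ).mulVecLin) ≤ LinearMap.range (J.mulVecLin) := by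
    rintro x ⟨v, rfl⟩
    refine ⟨Function.extend τ v 0, ?_⟩
    ext i
    simp only [Matrix.mulVecLin_apply, Matrix.mulVec, dotProduct,
      Matrix.submatrix_apply, id_eq]
    exact sum_mul_extend τ (J i) v
  have hk : (J.submatrix id τ).rank = k := by
    rw [Matrix.rank_of_isUnit _ ((Matrix.isUnit_iff_isUnit_det _).2 (isUnit_iff_ne_zero.2 h))]
    simp
  calc k = (J.submatrix id τ).rank := hk.symm
    _ ≤ J.rank := Submodule.finrank_mono hle

/-- Build an embedding `Fin k ↪ Fin n` from a finset of card `k`. -/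
noncomputable def embOfFinset {k n : ℕ} (T : Finset (Fin n)) (hT : T.card = k) :
    Fin k ↪ Fin n :=
  ⟨fun i => (T.orderIsoOfFin hT i : Fin n),
   fun a b h => (T.orderIsoOfFin hT).injective (Subtype.ext h)⟩

lemma embOfFinset_mem {k n : ℕ} (T : Finset (Fin n)) (hT : T.card = k) (i : Fin k) :
    embOfFinset T hT i ∈ T := (T.orderIsoOfFin hT i).2

lemma embOfFinset_surj {k n : ℕ} (T : Finset (Fin n)) (hT : T.card = k) {j : Fin n}
    (hj : j ∈ T) : ∃ i, embOfFinset T hT i = j :=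
  ⟨(T.orderIsoOfFin hT).symm ⟨j, hj⟩,
    congrArg Subtype.val ((T.orderIsoOfFin hT).apply_symm_apply ⟨j, hj⟩)⟩

/-- **Hamm's Jacobian criterion for Pham–Brieskorn–Hamm systems.**
Let `n ≥ 2`, `1 ≤ k ≤ n-1`, exponents `p j ≥ 2`, and `C` a `k × n` complex matrix.
All maximal minors of `C` are nonzero iff at every nonzero common zero `z` of the
polynomials `f i = ∑ j, C i j * z j ^ p j` the Jacobian matrix
`(C i j * p j * z j ^ (p j - 1))` has rank `k`. -/
theorem pham_brieskorn_hamm_isolated_singularity_criterion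
    (n k : ℕ) (hn : 2 ≤ n) (hk1 : 1 ≤ k) (hk2 : k ≤ n - 1)
    (p : Fin n → ℕ) (hp : ∀ j, 2 ≤ p j)
    (C : Matrix (Fin k) (Fin n) ℂ) :
    (∀ σ : Fin k ↪ Fin n, (C.submatrix id σ).det ≠ 0) ↔
      (∀ z : Fin n → ℂ,
        (∀ i, ∑ j, C i j * z j ^ p j = 0) → z ≠ 0 →
        (Matrix.of fun (i : Fin k) (j : Fin n) =>
          C i j * (p j : ℂ) * z j ^ (p j - 1)).rank = k) := by
  classical
  have hppos : ∀ j, p j ≠ 0 := fun j => by have := hp j; omega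
  constructor
  · -- minors nonzero → rank k at nonzero zeros
    intro hm z hz hz0
    set S : Finset (Fin n) := Finset.univ.filter (fun j => z j ≠ 0) with hS
    have hzS : ∀ j, j ∉ S → z j = 0 := by
      intro j hj
      by_contra h
      exact hj (by simp [hS, h])
    have hcard : k ≤ S.card := by
      by_contra hlt
      push_neg at hlt
      obtain ⟨T, hST, _, hTcard⟩ := Finset.exists_subsuperset_card_eq (Finset.subset_univ S)
        (le_of_lt hlt) (by simpa using (by omega : k ≤ n))
      set τ := embOfFinset T hTcard with hτ
      have hnov : ∀ v, (C.submatrix id τ).mulVec v = 0 → v = 0 := by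
        intro v hv
        by_contra hv0
        exact hm τ (Matrix.exists_mulVec_eq_zero_iff.mp ⟨v, hv0, hv⟩)
      have hmv : (C.submatrix id τ).mulVec (fun i => z (τ i) ^ p (τ i)) = 0 := by
        ext i0
        calc (C.submatrix id τ).mulVec (fun i => z (τ i) ^ p (τ i)) i0
            = ∑ i', C i0 (τ i') * z (τ i') ^ p (τ i') := by
              simp [Matrix.mulVec, dotProduct]
          _ = ∑ j, C i0 j * z j ^ p j := by
              refine sum_emb_eq_sum τ (fun j => C i0 j * z j ^ p j) fun j hj => ?_
              have hjT : j ∉ T := fun hjT => by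
                obtain ⟨i, hi⟩ := embOfFinset_surj T hTcard hjT
                exact hj i hi
              have : z j = 0 := hzS j fun hjS => hjT (hST hjS)
              show C i0 j * z j ^ p j = 0
              rw [this, zero_pow (hppos j), mul_zero]
          _ = 0 := hz i0
      have hv0 := hnov _ hmv
      obtain ⟨j0, hj0⟩ := Function.ne_iff.mp hz0
      have hj0' : z j0 ≠ 0 := by simpa using hj0
      have hj0S : j0 ∈ S := by simp [hS, hj0']
      obtain ⟨i0, hi0⟩ := embOfFinset_surj T hTcard (hST hj0S)
      have := congrFun hv0 i0
      simp only [hτ, hi0, Pi.zero_apply] at this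
      exact pow_ne_zero _ hj0' this
    obtain ⟨T, hTS, hTcard⟩ := Finset.exists_subset_card_eq hcard
    set τ := embOfFinset T hTcard with hτ
    refine rank_eq_of_submatrix_det _ τ ?_
    have hfac : (Matrix.of fun (i : Fin k) (j : Fin n) =>
          C i j * (p j : ℂ) * z j ^ (p j - 1)).submatrix id τ
        = (C.submatrix id τ) *
          Matrix.diagonal (fun i' => ((p (τ i') : ℂ)) * z (τ i') ^ (p (τ i') - 1)) := by
      ext i i'
      simp [Matrix.mul_diagonal, mul_assoc]
    rw [hfac, Matrix.det_mul, Matrix.det_diagonal]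
    refine mul_ne_zero (hm τ) (Finset.prod_ne_zero_iff.2 fun i' _ => ?_)
    have hzτ : z (τ i') ≠ 0 := by
      have := hTS (embOfFinset_mem T hTcard i')
      simp only [hS, Finset.mem_filter] at this
      exact this.2
    exact mul_ne_zero (Nat.cast_ne_zero.2 (hppos _)) (pow_ne_zero _ hzτ)
  · -- rank criterion → minors nonzero
    intro hJ σ
    by_contra hdet
    obtain ⟨v, hv0, hv⟩ := Matrix.exists_mulVec_eq_zero_iff.mpr hdet
    obtain ⟨u, hu0, hu⟩ := Matrix.exists_vecMul_eq_zero_iff.mpr hdet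
    set w : Fin n → ℂ := Function.extend σ v 0 with hw
    choose z hzw using fun j => IsAlgClosed.exists_pow_nat_eq (w j)
      (Nat.pos_of_ne_zero (hppos j))
    have hz0w : ∀ j, w j = 0 → z j = 0 := by
      intro j h
      have : z j ^ p j = 0 := by rw [hzw j, h]
      exact pow_eq_zero_iff (hppos j) |>.mp this
    have hzero : ∀ i, ∑ j, C i j * z j ^ p j = 0 := by
      intro i
      calc ∑ j, C i j * z j ^ p j = ∑ j, C i j * w j := by
            simp_rw [hzw]
        _ = ∑ i', C i (σ i') * v i' := sum_mul_extend σ (C i) v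
        _ = (C.submatrix id σ).mulVec v i := by
            simp [Matrix.mulVec, dotProduct]
        _ = 0 := by rw [hv]; rfl
    have hzne : z ≠ 0 := by
      obtain ⟨i1, hi1⟩ := Function.ne_iff.mp hv0
      refine Function.ne_iff.mpr ⟨σ i1, fun h => hi1 ?_⟩
      have : w (σ i1) = 0 := by
        rw [← hzw (σ i1)]
        simp only [Pi.zero_apply] at h
        rw [h, zero_pow (hppos _)]
      rwa [hw, σ.injective.extend_apply] at this
    have hrank := hJ z hzero hzne
    have hvm : Matrix.vecMul u (Matrix.of fun (i : Fin k) (j : Fin n) =>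
        C i j * (p j : ℂ) * z j ^ (p j - 1)) = 0 := by
      ext j
      have hstep : Matrix.vecMul u (Matrix.of fun (i : Fin k) (j : Fin n) =>
          C i j * (p j : ℂ) * z j ^ (p j - 1)) j
          = (∑ i, u i * C i j) * ((p j : ℂ) * z j ^ (p j - 1)) := by
        simp only [Matrix.vecMul, dotProduct, Matrix.of_apply, Finset.sum_mul]
        exact Finset.sum_congr rfl fun i _ => by ring
      rw [hstep]
      by_cases hjr : ∃ i', σ i' = j
      · obtain ⟨i', rfl⟩ := hjr
        have : (∑ i, u i * C i (σ i')) = Matrix.vecMul u (C.submatrix id σ) i' := by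
          simp [Matrix.vecMul, dotProduct]
        rw [this, hu]
        simp
      · have hwj : w j = 0 := by
          rw [hw, Function.extend_apply' _ _ _ hjr]
          rfl
        have hzj : z j = 0 := hz0w j hwj
        rw [hzj, zero_pow (by have := hp j; omega : p j - 1 ≠ 0)]
        simp
    have := rank_lt_of_vecMul_eq_zero _ u hu0 hvm
    omega
end

section
/- Let M be a commutative monoid that is unit-integral in the following sense: for all units u, v of M and every element p ∈ M, if u·p = v·p then u = v. Then for every monoid homomorphism φ from the group of units Mˣ to the circle group S¹ = {w ∈ ℂ : |w| = 1}: (a) there exists a monoid homomorphism ψ : M → S¹ with ψ(u) = φ(u) for every unit u of M; and (b) for any two such extensions ψ₁, ψ₂ there is a unique monoid homomorphism θ : M → S¹ with θ(u) = 1 for every unit u and ψ₂ = θ·ψ₁ (pointwise product). Hence the set of extensions of φ is a nonempty torsor under the group of monoid homomorphisms M → S¹ that are trivial on all units. -/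
/-! Auxiliary material: divisibility of the circle group, extension of circle-valued
characters from subgroups of abelian groups, and the group completion of a commutative
monoid realized as the localization at the top submonoid. -/

open Real

lemma Circle.exp_zpow' (r : ℝ) (n : ℤ) : Circle.exp r ^ n = Circle.exp (n * r) := by
  have h := map_zsmul Circle.expHom n r
  rw [zsmul_eq_mul] at h
  simpa [Circle.expHom] using h.symm

noncomputable instance : DivisibleBy (Additive Circle) ℤ where
  div a n := if n = 0 then 0 else
    Additive.ofMul (Circle.exp (Complex.arg (a.toMul : ℂ) / n))
  div_zero a := if_pos rfl
  div_cancel {n} a hn := by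
    simp only [if_neg hn]
    rw [show ∀ (k : ℤ) (x : Circle), k • Additive.ofMul x = Additive.ofMul (x ^ k) from
      fun _ _ => rfl]
    rw [Circle.exp_zpow', mul_div_cancel₀ _ (by exact_mod_cast hn)]
    exact congrArg Additive.ofMul (Circle.exp_arg a.toMul)

/-- Circle-valued characters extend from subgroups: the circle is divisible, hence an
injective abelian group. -/
lemma exists_circle_extension {G : Type*} [CommGroup G] (H : Subgroup G)
    (f : H →* Circle) : ∃ g : G →* Circle, ∀ h : H, g h = f h := by
  obtain ⟨g', hg'⟩ := (Module.Baer.of_divisible (Additive Circle)).extension_property_addMonoidHom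
    (MonoidHom.toAdditive H.subtype) (fun a b hab => by
      simpa using Subtype.ext (congrArg Additive.toMul hab))
    (MonoidHom.toAdditive f)
  refine ⟨MonoidHom.toAdditive.symm g', fun h => ?_⟩
  exact congrArg Additive.toMul (DFunLike.congr_fun hg' (Additive.ofMul h))

section GroupCompletion

variable {M : Type*} [CommMonoid M]

/-- The localization of a commutative monoid at the top submonoid is its group
completion; in particular it is a group. -/
noncomputable instance Localization.topCommGroup :
    CommGroup (Localization (⊤ : Submonoid M)) :=
  { (inferInstance : CommMonoid (Localization (⊤ : Submonoid M))) with
    inv := fun x => Localization.liftOn x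
      (fun a b => Localization.mk (b : M) ⟨a, Submonoid.mem_top a⟩)
      (by
        intro a c b d h
        rw [Localization.r_iff_exists] at h
        obtain ⟨k, hk⟩ := h
        rw [Localization.mk_eq_mk_iff, Localization.r_iff_exists]
        refine ⟨k, ?_⟩
        show (k : M) * ((c : M) * (b : M)) = (k : M) * (a * (d : M))
        rw [mul_comm (c : M) (b : M), ← hk, mul_comm (d : M) a])
    inv_mul_cancel := fun x => by
      induction x using Localization.ind with
      | _ y =>
        rcases y with ⟨a, b⟩
        show Localization.mk (b : M) ⟨a, Submonoid.mem_top a⟩ * Localization.mk a b = 1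
        rw [Localization.mk_mul, ← Localization.mk_one,
          Localization.mk_eq_mk_iff, Localization.r_iff_exists]
        exact ⟨1, by simp [mul_comm]⟩ }

/-- The canonical map from a commutative monoid to its group completion. -/
def toTopLocalization : M →* Localization (⊤ : Submonoid M) where
  toFun m := Localization.mk m 1
  map_one' := Localization.mk_one
  map_mul' a b := by rw [Localization.mk_mul, one_mul]

/-- Unit-integrality says exactly that the units inject into the group completion. -/
lemma toTopLocalization_inj_on_units
    (hM : ∀ (u v : Mˣ) (p : M), (u : M) * p = (v : M) * p → u = v)
    {u v : Mˣ} (h : toTopLocalization (u : M) = toTopLocalization (v : M)) : u = v := by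
  rw [show toTopLocalization (u : M) = Localization.mk (u : M) 1 from rfl,
    show toTopLocalization (v : M) = Localization.mk (v : M) 1 from rfl,
    Localization.mk_eq_mk_iff, Localization.r_iff_exists] at h
  obtain ⟨k, hk⟩ := h
  simp only [OneMemClass.coe_one, one_mul] at hk
  exact hM u v k (by rw [mul_comm ((u:M)) (k:M), mul_comm ((v:M)) (k:M)]; exact hk)

end GroupCompletion

/-- **Torsor structure on extensions of a circle-valued morphism on the units.**
Let `M` be a commutative monoid which is unit-integral: if `u * p = v * p` for units
`u, v` and `p ∈ M` then `u = v`. Then every monoid homomorphism `φ : Mˣ →* S¹` to the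
circle group extends to a monoid homomorphism `ψ : M →* S¹`, and any two such
extensions differ by a unique monoid homomorphism `θ : M →* S¹` which is trivial on all
units: the set of extensions is a nonempty torsor under the group of circle-valued
morphisms of `M` trivial on the units. -/
theorem extensions_of_unit_morphism_torsor
    (M : Type*) [CommMonoid M]
    (hM : ∀ (u v : Mˣ) (p : M), (u : M) * p = (v : M) * p → u = v)
    (φ : Mˣ →* Circle) :
    (∃ ψ : M →* Circle, ∀ u : Mˣ, ψ (u : M) = φ u) ∧
    (∀ ψ₁ ψ₂ : M →* Circle,
      (∀ u : Mˣ, ψ₁ (u : M) = φ u) → (∀ u : Mˣ, ψ₂ (u : M) = φ u) →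
      ∃! θ : M →* Circle,
        (∀ u : Mˣ, θ (u : M) = 1) ∧ ∀ m : M, ψ₂ m = θ m * ψ₁ m) := by
  constructor
  · -- Existence of an extension, via the group completion
    set L := Localization (⊤ : Submonoid M)
    set ι : M →* L := toTopLocalization
    set g : Mˣ →* L := ι.comp (Units.coeHom M) with hg
    have ginj : Function.Injective g := fun u v h =>
      toTopLocalization_inj_on_units hM h
    -- identify `Mˣ` with its image in the group completion
    let e : Mˣ ≃* g.range := MonoidHom.ofInjective ginj
    obtain ⟨Ψ, hΨ⟩ := exists_circle_extension g.range (φ.comp (e.symm : g.range →* Mˣ))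
    refine ⟨Ψ.comp ι, fun u => ?_⟩
    have h1 : Ψ (g u) = φ (e.symm ⟨g u, ⟨u, rfl⟩⟩) := hΨ ⟨g u, ⟨u, rfl⟩⟩
    have h2 : e.symm ⟨g u, ⟨u, rfl⟩⟩ = u := by
      apply ginj
      exact MonoidHom.apply_ofInjective_symm ginj ⟨g u, ⟨u, rfl⟩⟩
    have h3 : Ψ (g u) = φ u := by simpa [h2] using h1
    exact h3
  · -- Uniqueness of the difference character
    intro ψ₁ ψ₂ h₁ h₂
    refine ⟨ψ₂ / ψ₁, ⟨fun u => ?_, fun m => ?_⟩, fun θ hθ => ?_⟩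
    · show ψ₂ (u : M) / ψ₁ (u : M) = 1
      rw [h₁, h₂, div_self']
    · show ψ₂ m = ψ₂ m / ψ₁ m * ψ₁ m
      rw [div_mul_cancel]
    · refine MonoidHom.ext fun m => ?_
      show θ m = ψ₂ m / ψ₁ m
      rw [hθ.2 m, mul_div_assoc, div_self', mul_one]
end

section
/- Let f : ℂ → ℂ, let m be a natural number, and let g : ℂ → ℂ be analytic at 0 with g(0) ≠ 0, such that f(z) = zᵐ·g(z) for all z in some neighborhood of 0 in ℂ. Then there exists ε > 0 such that the function F : [0,ε) × S¹ → ℂ defined by F(r,u) = f(r·u)/|f(r·u)| for r > 0 and F(0,u) = uᵐ·g(0)/|g(0)| is continuous on [0,ε) × S¹, where S¹ = {u ∈ ℂ : |u| = 1}. -/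
open Filter Topology

/-- **Continuous extension of the lifted argument function to the real oriented blowup.**
Let `f : ℂ → ℂ`, `m : ℕ`, and let `g` be analytic at `0` with `g 0 ≠ 0`, such that
`f z = z ^ m * g z` near `0`. Then there is `ε > 0` such that the function
`F (r, u) = f (r * u) / |f (r * u)|` for `r > 0`, `F (0, u) = u ^ m * g 0 / |g 0|`,
is continuous on `[0, ε) × S¹`. -/
theorem arg_lift_extends_to_real_oriented_blowup
    (f : ℂ → ℂ) (m : ℕ) (g : ℂ → ℂ)
    (hg : AnalyticAt ℂ g 0) (hg0 : g 0 ≠ 0)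
    (hfg : ∀ᶠ z in 𝓝 (0 : ℂ), f z = z ^ m * g z) :
    ∃ ε > (0 : ℝ), ContinuousOn
      (fun q : ℝ × ℂ =>
        if q.1 = 0 then q.2 ^ m * g 0 / (‖g 0‖ : ℂ)
        else f (q.1 * q.2) / (‖f (q.1 * q.2)‖ : ℂ))
      (Set.Ico (0 : ℝ) ε ×ˢ {u : ℂ | ‖u‖ = 1}) := by
  have hev : ∀ᶠ z in 𝓝 (0 : ℂ),
      f z = z ^ m * g z ∧ AnalyticAt ℂ g z ∧ g z ≠ 0 :=
    hfg.and ((hg.eventually_analyticAt).and (hg.continuousAt.eventually_ne hg0))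
  rw [Metric.eventually_nhds_iff] at hev
  obtain ⟨δ, hδ, hδ'⟩ := hev
  refine ⟨δ, hδ, ?_⟩
  have hmem : ∀ q : ℝ × ℂ,
      q ∈ Set.Ico (0 : ℝ) δ ×ˢ {u : ℂ | ‖u‖ = 1} →
      ‖((q.1 : ℂ) * q.2)‖ < δ := by
    intro q hq
    have h1 : ‖(q.1 : ℂ)‖ = q.1 := by
      rw [Complex.norm_real, Real.norm_eq_abs, abs_of_nonneg hq.1.1]
    rw [norm_mul, h1, hq.2]
    simpa using hq.1.2
  have key : ∀ q : ℝ × ℂ,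
      ‖((q.1 : ℂ) * q.2)‖ < δ →
      f ((q.1 : ℂ) * q.2) = ((q.1 : ℂ) * q.2) ^ m * g ((q.1 : ℂ) * q.2)
        ∧ AnalyticAt ℂ g ((q.1 : ℂ) * q.2) ∧ g ((q.1 : ℂ) * q.2) ≠ 0 := by
    intro q hq
    exact hδ' (by simpa [dist_eq_norm] using hq)
  -- the limit function
  set G : ℝ × ℂ → ℂ := fun q =>
    q.2 ^ m * g ((q.1 : ℂ) * q.2) / (‖g ((q.1 : ℂ) * q.2)‖ : ℂ) with hG
  have hGcont : ContinuousOn G (Set.Ico (0 : ℝ) δ ×ˢ {u : ℂ | ‖u‖ = 1}) := by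
    intro q hq
    have hlt := hmem q hq
    obtain ⟨-, hga, hgne⟩ := key q hlt
    have hc1 : ContinuousAt (fun q : ℝ × ℂ => (q.1 : ℂ) * q.2) q :=
      (Complex.continuous_ofReal.comp continuous_fst).continuousAt.mul
        continuous_snd.continuousAt
    have hc2 : ContinuousAt (fun q : ℝ × ℂ => g ((q.1 : ℂ) * q.2)) q :=
      ContinuousAt.comp (f := fun q : ℝ × ℂ => (q.1 : ℂ) * q.2) hga.continuousAt hc1
    have hc3 : ContinuousAt (fun q : ℝ × ℂ =>
        (‖g ((q.1 : ℂ) * q.2)‖ : ℂ)) q :=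
      Complex.continuous_ofReal.continuousAt.comp (continuous_norm.continuousAt.comp hc2)
    have hne : (‖g ((q.1 : ℂ) * q.2)‖ : ℂ) ≠ 0 := by
      simpa using (norm_ne_zero_iff.mpr hgne)
    exact (((continuous_snd.pow m).continuousAt.mul hc2).div hc3 hne).continuousWithinAt
  refine hGcont.congr ?_
  intro q hq
  have hlt := hmem q hq
  obtain ⟨hfz, -, hgne⟩ := key q hlt
  have habs : (‖g ((q.1 : ℂ) * q.2)‖ : ℂ) ≠ 0 := by
    simpa using (norm_ne_zero_iff.mpr hgne)
  by_cases h0 : q.1 = 0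
  · simp only [h0, if_pos]
    simp [hG, h0]
  · simp only [if_neg h0]
    have hqpos : 0 < q.1 := lt_of_le_of_ne hq.1.1 (Ne.symm h0)
    have habsf : ‖f ((q.1 : ℂ) * q.2)‖
        = q.1 ^ m * ‖g ((q.1 : ℂ) * q.2)‖ := by
      rw [hfz, norm_mul, norm_pow, norm_mul, Complex.norm_real, Real.norm_eq_abs, abs_of_nonneg hqpos.le,
        hq.2, mul_one]
    rw [habsf, hfz, hG]
    have hq1ne : ((q.1 : ℂ)) ^ m ≠ 0 := pow_ne_zero _ (by exact_mod_cast h0)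
    push_cast
    rw [mul_pow]
    field_simp
end
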